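/- Suppose $L(x_0) = a$ for some $x_0 \in \mathbb{F}_{p^n}$, where $L$ is a $p$-linearized polynomial over $\mathbb{F}_p$ with $X - X^{p^k} = L \circ L'$. With $d = \gcd(n,k)$ and $U$ defined from $u = l'/\gcd(l', t_d^k)$, we have $U(T_d^n(a)) = 0$. -/
import Mathlib


open Polynomial

noncomputable def Tpoly (p l k : ℕ) : Polynomial (ZMod p) :=
  ∑ i ∈ Finset.range (k / l), X ^ p ^ (l * i)

noncomputable def Spoly (p l k : ℕ) : Polynomial (ZMod p) :=
  ∑ i ∈ Finset.range (k / l), C ((-1 : ZMod p) ^ i) * X ^ p ^ (l * i)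

noncomputable def linAssoc (p : ℕ) (l : Polynomial (ZMod p)) : Polynomial (ZMod p) :=
  ∑ i ∈ l.support, C (l.coeff i) * X ^ p ^ i

section Aux

variable (p : ℕ) [Fact p.Prime] (A : Type*) [CommRing A] [Algebra (ZMod p) A] [CharP A p]

/-- The Frobenius endomorphism as a `ZMod p`-linear endomorphism. -/
noncomputable def frobEnd : Module.End (ZMod p) A where
  toFun x := x ^ p
  map_add' x y := add_pow_char x y p
  map_smul' c x := by
    simp only [RingHom.id_apply, Algebra.smul_def, mul_pow, ← map_pow, ZMod.pow_card]

@[simp] lemma frobEnd_apply (x : A) : frobEnd p A x = x ^ p := rfl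

lemma frobEnd_pow_apply (i : ℕ) (y : A) : (frobEnd p A ^ i) y = y ^ p ^ i := by
  induction i with
  | zero => simp
  | succ m ih =>
    rw [pow_succ', Module.End.mul_apply, ih, frobEnd_apply, ← pow_mul, pow_succ]

lemma aeval_linAssoc (f : Polynomial (ZMod p)) (y : A) :
    aeval y (linAssoc p f) = aeval (frobEnd p A) f y := by
  conv_rhs => rw [f.as_sum_support]
  rw [map_sum, LinearMap.sum_apply, linAssoc, map_sum]
  refine Finset.sum_congr rfl fun i _ => ?_
  rw [map_mul, aeval_C, aeval_X_pow, aeval_monomial, Module.End.mul_apply,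
    frobEnd_pow_apply, Module.algebraMap_end_apply, Algebra.smul_def]

lemma linAssoc_mul (f g : Polynomial (ZMod p)) :
    linAssoc p (f * g) = (linAssoc p f).comp (linAssoc p g) := by
  have h0 : linAssoc p g = aeval X (linAssoc p g) := (aeval_X_left_apply _).symm
  rw [← aeval_X_left_apply (linAssoc p (f * g)),
    aeval_linAssoc p (Polynomial (ZMod p)) (f * g) X, map_mul, Module.End.mul_apply,
    ← aeval_linAssoc p (Polynomial (ZMod p)) g X, ← h0,
    ← aeval_linAssoc p (Polynomial (ZMod p)) f (linAssoc p g), comp_eq_aeval]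

lemma linAssoc_coeff (f : Polynomial (ZMod p)) (j : ℕ) :
    (linAssoc p f).coeff (p ^ j) = f.coeff j := by
  have hinj : ∀ i : ℕ, p ^ j = p ^ i ↔ j = i := fun i =>
    ⟨fun h => Nat.pow_right_injective (Fact.out : p.Prime).two_le h, fun h => h ▸ rfl⟩
  rw [linAssoc, finset_sum_coeff]
  simp only [coeff_C_mul, coeff_X_pow, hinj, mul_ite, mul_one, mul_zero]
  rw [Finset.sum_ite_eq]
  by_cases hj : j ∈ f.support
  · simp [hj]
  · simp [hj, notMem_support_iff.mp hj]

end Aux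

theorem stmt11 (p : ℕ) [Fact p.Prime] (n k : ℕ) (hn : 0 < n) (hk : 0 < k)
    (l l' : Polynomial (ZMod p))
    (h : (linAssoc p l).comp (linAssoc p l') = X - X ^ p ^ k)
    (d : ℕ) (hd : d = Nat.gcd n k)
    (t w u : Polynomial (ZMod p))
    (ht : t = ∑ i ∈ Finset.range (k / d), X ^ (d * i))
    (hw : w = gcd l' t) (hu : u = l' / w)
    (a x₀ : GaloisField p n) (hx₀ : aeval x₀ (linAssoc p l) = a) :
    aeval (aeval a (Tpoly p d n)) (linAssoc p u) = 0 := by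
  have hp2 : 2 ≤ p := (Fact.out : p.Prime).two_le
  have hd0 : 0 < d := hd ▸ Nat.gcd_pos_of_pos_left _ hn
  have hdk : d ∣ k := hd ▸ Nat.gcd_dvd_right n k
  have hdn : d ∣ n := hd ▸ Nat.gcd_dvd_left n k
  -- recover the conventional identity l * l' = 1 - X ^ k
  have hll' : l * l' = 1 - X ^ k := by
    have hm : linAssoc p (l * l') = X - X ^ p ^ k := by rw [linAssoc_mul]; exact h
    ext j
    have hc : (l * l').coeff j = (X - X ^ p ^ k : Polynomial (ZMod p)).coeff (p ^ j) := by
      rw [← hm, linAssoc_coeff]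
    rw [hc, coeff_sub, coeff_sub, coeff_X, coeff_X_pow, coeff_one, coeff_X_pow]
    have h1 : (1 = p ^ j) ↔ (j = 0) := by
      constructor
      · intro hh
        by_contra hj0
        exact absurd hh.symm (Nat.one_lt_pow hj0 (by omega)).ne'
      · rintro rfl; simp
    have h2 : (p ^ j = p ^ k) ↔ (j = k) :=
      ⟨fun hh => Nat.pow_right_injective hp2 hh, fun hh => hh ▸ rfl⟩
    simp only [h1, h2]
  -- geometric series identities
  have key : ∀ m : ℕ, d ∣ m →
      (1 - X ^ d) * (∑ i ∈ Finset.range (m / d), X ^ (d * i) : Polynomial (ZMod p))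
        = 1 - X ^ m := by
    intro m hm
    have hg := geom_sum_mul (X ^ d : Polynomial (ZMod p)) (m / d)
    rw [← pow_mul, Nat.mul_div_cancel' hm] at hg
    simp only [pow_mul]
    linear_combination -hg
  have htk : (1 - X ^ d) * t = 1 - X ^ k := by rw [ht]; exact key k hdk
  set tn : Polynomial (ZMod p) := ∑ i ∈ Finset.range (n / d), X ^ (d * i) with htn_def
  have htn : (1 - X ^ d) * tn = 1 - X ^ n := key n hdn
  have hwl : w ∣ l' := hw ▸ gcd_dvd_left _ _
  have hwt : w ∣ t := hw ▸ gcd_dvd_right _ _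
  have ht0 : t ≠ 0 := by
    intro h0
    have hcoeff : t.coeff 0 = 1 := by
      rw [ht, finset_sum_coeff]
      rw [Finset.sum_eq_single 0]
      · simp
      · intro i _ hne
        rw [coeff_X_pow]
        have : d * i ≠ 0 := Nat.mul_ne_zero hd0.ne' hne
        simp [Ne.symm this]
      · intro h0'
        exact absurd (Finset.mem_range.mpr (Nat.div_pos (Nat.le_of_dvd hk hdk) hd0)) h0'
    rw [h0] at hcoeff
    simp at hcoeff
  have hw0 : w ≠ 0 := by
    intro h0
    rw [hw] at h0
    exact ht0 ((gcd_eq_zero_iff l' t).mp h0).2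
  obtain ⟨s, hs⟩ := hwt
  have hmain : u * (tn * l) = s * (1 - X ^ n) := by
    have hcancel : w * u = l' := by rw [hu]; exact EuclideanDomain.mul_div_cancel' hw0 hwl
    apply mul_right_cancel₀ hw0
    calc u * (tn * l) * w = tn * (l * (w * u)) := by ring
      _ = tn * (l * l') := by rw [hcancel]
      _ = tn * (1 - X ^ k) := by rw [hll']
      _ = tn * ((1 - X ^ d) * t) := by rw [htk]
      _ = ((1 - X ^ d) * tn) * (w * s) := by rw [← hs]; ring
      _ = (1 - X ^ n) * (w * s) := by rw [htn]
      _ = s * (1 - X ^ n) * w := by ring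
  -- evaluation
  have hxcard : ∀ x : GaloisField p n, x ^ p ^ n = x := by
    intro x
    haveI : Fintype (GaloisField p n) := Fintype.ofFinite _
    have hcard : Fintype.card (GaloisField p n) = p ^ n := by
      rw [← Nat.card_eq_fintype_card, GaloisField.card p n hn.ne']
    rw [← hcard]
    exact FiniteField.pow_card x
  have hTa : aeval a (Tpoly p d n) = aeval (frobEnd p (GaloisField p n)) tn a := by
    rw [Tpoly, map_sum, map_sum, LinearMap.sum_apply]
    refine Finset.sum_congr rfl fun i _ => ?_
    rw [aeval_X_pow, map_pow, aeval_X, frobEnd_pow_apply]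
  have hx : a = aeval (frobEnd p (GaloisField p n)) l x₀ := by rw [← hx₀, aeval_linAssoc]
  rw [aeval_linAssoc, hTa, hx, ← Module.End.mul_apply, ← map_mul, ← Module.End.mul_apply,
    ← map_mul, mul_assoc, hmain, map_mul, Module.End.mul_apply]
  have hzero : aeval (frobEnd p (GaloisField p n)) (1 - X ^ n : Polynomial (ZMod p)) x₀ = 0 := by
    rw [map_sub, map_one, map_pow, aeval_X, LinearMap.sub_apply, Module.End.one_apply,
      frobEnd_pow_apply, hxcard x₀, sub_self]
  rw [hzero, map_zero]
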